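/- Let F : ℝ^d → ℝ be twice continuously differentiable with a minimizer w*, and suppose its Hessian ∇²F is L-Lipschitz in spectral norm: ‖∇²F(w) − ∇²F(w′)‖₂ ≤ L‖w − w′‖₂ for all w, w′. Fix an iterate w_t, let H_t = ∇²F(w_t) be symmetric positive definite with condition number κ_t = σ_max(H_t)/σ_min(H_t), and let ε ∈ (0, 1/2]. Suppose there are m symmetric positive definite matrices H̃_{t,1}, …, H̃_{t,m} with (1−ε)H_t ⪯ H̃_{t,i} ⪯ (1+ε)H_t for every i ∈ [m] and (1/m)·Σ_{i=1}^m H̃_{t,i} = H_t, and set w_{t+1} = w_t − (1/m)·Σ_{i=1}^m H̃_{t,i}⁻¹ ∇F(w_t). Then ‖w_{t+1} − w*‖₂ ≤ 3ε²·√κ_t·‖w_t − w*‖₂ + (L/σ_min(H_t))·‖w_t − w*‖₂². -/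

import Mathlib

/-!
Put `Δ = w_t - w*`, `P = (1/m) Σ H̃ᵢ⁻¹` and `r = ∇F(w_t) - H_t Δ`, so that
`w_{t+1} - w* = (1 - P H_t) Δ - P r`. Taylor's formula with the `L`-Lipschitz Hessian gives
`‖r‖ ≤ L/2 ‖Δ‖²`, and `H̃ᵢ ⪰ (1 - ε) H_t ⪰ σ_min/2` gives `‖P‖ ≤ 2/σ_min`.
For the first term, conjugate by `S = H_t^{1/2}`: the matrices `Tᵢ = S⁻¹ H̃ᵢ S⁻¹` satisfy
`(1 - ε) ⪯ Tᵢ ⪯ (1 + ε)` and average to `1`, so the first-order terms cancel in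
`1 - S P S = -(1/m) Σ Tᵢ⁻¹ (Tᵢ - 1)²`, whose norm is at most `ε²/(1 - ε) ≤ 2ε²`.
Undoing the conjugation costs `‖S‖ ‖S⁻¹‖ = √κ_t`.
-/

open Matrix

noncomputable section

/-- The smallest eigenvalue of a Hermitian matrix. -/
def sMin {d : ℕ} {H : Matrix (Fin d) (Fin d) ℝ} (hH : H.IsHermitian) : ℝ :=
  ⨅ i, hH.eigenvalues i

/-- The largest eigenvalue of a Hermitian matrix. -/
def sMax {d : ℕ} {H : Matrix (Fin d) (Fin d) ℝ} (hH : H.IsHermitian) : ℝ :=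
  ⨆ i, hH.eigenvalues i

open scoped Matrix.Norms.L2Operator MatrixOrder RealInnerProductSpace

theorem norm_image_sub_sub_fderiv_le_of_lipschitz {E F : Type*} [NormedAddCommGroup E]
    [NormedSpace ℝ E] [NormedAddCommGroup F] [NormedSpace ℝ F] {f : E → F} {f' : E → E →L[ℝ] F}
    {L : ℝ} (hf : ∀ w, HasFDerivAt f (f' w) w)
    (hLip : ∀ w w' v, ‖f' w v - f' w' v‖ ≤ L * ‖w - w'‖ * ‖v‖) (x y : E) :
    ‖f y - f x - f' y (y - x)‖ ≤ L / 2 * ‖y - x‖ ^ 2 := by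
  set v := y - x
  set γ : ℝ → E := fun s => x + s • v
  have hγ (s : ℝ) : HasDerivAt γ v s :=
    (((hasDerivAt_id s).smul_const v).const_add x).congr_deriv (one_smul ℝ v)
  have hg (s : ℝ) :
      HasDerivAt (fun s => f (γ s) - f x - s • f' y v) (f' (γ s) v - f' y v) s :=
    ((((hf (γ s)).comp_hasDerivAt s (hγ s)).sub_const (f x)).sub
      ((hasDerivAt_id s).smul_const (f' y v))).congr_deriv (by rw [one_smul])
  have hB (s : ℝ) :
      HasDerivAt (fun s => L * ‖v‖ ^ 2 * (s - s ^ 2 / 2)) (L * ‖v‖ ^ 2 * (1 - s)) s := by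
    simpa using (((hasDerivAt_id s).sub ((hasDerivAt_pow 2 s).div_const 2)).const_mul
      (L * ‖v‖ ^ 2))
  -- `‖f' (γ s) v - f' y v‖ ≤ L (1 - s) ‖v‖²` integrates to `L / 2 ‖v‖²` over `[0, 1]`
  have key := image_norm_le_of_norm_deriv_right_le_deriv_boundary (a := 0) (b := 1)
    (fun s _ => (hg s).continuousAt.continuousWithinAt) (fun s _ => (hg s).hasDerivWithinAt)
    (by simp [γ]) hB (fun s hs => ?_) (Set.right_mem_Icc.2 zero_le_one)
  · convert key using 1
    · simp [γ, v]
    · ring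
  · have hdist : ‖γ s - y‖ = (1 - s) * ‖v‖ := by
      rw [show γ s - y = (s - 1) • v by simp only [γ, v]; module, norm_smul,
        Real.norm_of_nonpos (by linarith [hs.2]), neg_sub]
    calc ‖f' (γ s) v - f' y v‖ ≤ L * ‖γ s - y‖ * ‖v‖ := hLip _ _ _
      _ = L * ‖v‖ ^ 2 * (1 - s) := by rw [hdist]; ring

theorem IsLocalMin.gradient_eq_zero {E : Type*} [NormedAddCommGroup E] [InnerProductSpace ℝ E]
    [CompleteSpace E] {f : E → ℝ} {a : E} (h : IsLocalMin f a) : gradient f a = 0 := by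
  simp [gradient, h.fderiv_eq_zero]

theorem ContDiff.differentiable_gradient {E : Type*} [NormedAddCommGroup E]
    [InnerProductSpace ℝ E] [CompleteSpace E] {f : E → ℝ} (hf : ContDiff ℝ 2 f) :
    Differentiable ℝ (gradient f) :=
  ((InnerProductSpace.toDual ℝ E).symm.contDiff.comp (hf.fderiv_right le_rfl)).differentiable
    one_ne_zero

theorem norm_average_le {E : Type*} [SeminormedAddCommGroup E] [NormedSpace ℝ E] {m : ℕ}
    {f : Fin m → E} {c : ℝ} (hc : 0 ≤ c) (h : ∀ i, ‖f i‖ ≤ c) :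
    ‖((1 : ℝ) / m) • ∑ i, f i‖ ≤ c := by
  rcases Nat.eq_zero_or_pos m with rfl | hm
  · simpa using hc
  calc ‖((1 : ℝ) / m) • ∑ i, f i‖ ≤ (1 / m) * ∑ _i : Fin m, c := by
        rw [norm_smul, Real.norm_of_nonneg (by positivity)]
        gcongr
        exact (norm_sum_le _ _).trans (Finset.sum_le_sum fun i _ => h i)
    _ = c := by simp [field]

theorem norm_one_sub_average_le {R : Type*} [NormedRing R] [NormedAlgebra ℝ R] {m : ℕ}
    {T U : Fin m → R} {a ε : ℝ} (ha : 0 ≤ a) (hUT : ∀ i, U i * T i = 1)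
    (hU : ∀ i, ‖U i‖ ≤ a) (hT : ∀ i, ‖T i - 1‖ ≤ ε) (havg : ((1 : ℝ) / m) • ∑ i, T i = 1) :
    ‖1 - ((1 : ℝ) / m) • ∑ i, U i‖ ≤ a * ε ^ 2 := by
  rcases Nat.eq_zero_or_pos m with rfl | hm
  · have : Subsingleton R := subsingleton_of_zero_eq_one (by simpa using havg)
    simpa [Subsingleton.elim (1 - _ : R) 0] using mul_nonneg ha (sq_nonneg ε)
  have hsq (i : Fin m) : U i * (T i - 1) ^ 2 = U i + T i - 2 := by
    have : U i * (T i - 1) ^ 2 = U i * T i * T i - 2 * (U i * T i) + U i := by noncomm_ring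
    rw [this, hUT, one_mul, mul_one]
    abel
  -- the first-order terms `T i - 1` average out, leaving only the quadratic ones
  have hkey : 1 - ((1 : ℝ) / m) • ∑ i, U i = -(((1 : ℝ) / m) • ∑ i, U i * (T i - 1) ^ 2) := by
    simp only [hsq, Finset.sum_sub_distrib, Finset.sum_add_distrib, smul_sub, smul_add, havg,
      Finset.sum_const, Finset.card_univ, Fintype.card_fin, ← Nat.cast_smul_eq_nsmul ℝ, smul_smul]
    rw [show (1 : ℝ) / m * m = 1 by field_simp, one_smul, one_add_one_eq_two.symm]
    abel
  rw [hkey, norm_neg]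
  refine norm_average_le (by positivity) fun i => ?_
  calc ‖U i * (T i - 1) ^ 2‖ ≤ ‖U i‖ * ‖T i - 1‖ ^ 2 := by
        grw [norm_mul_le, norm_pow_le' _ two_pos]
    _ ≤ a * ε ^ 2 :=
        mul_le_mul (hU i) (pow_le_pow_left₀ (norm_nonneg _) (hT i) 2) (by positivity) ha

namespace Matrix

theorem posDef_of_smul_one_le {n : Type*} [DecidableEq n] {A : Matrix n n ℝ} {c : ℝ}
    (hc : 0 < c) (h : c • 1 ≤ A) : A.PosDef := by
  simpa using PosDef.posSemidef_add (le_iff.1 h) (PosDef.one.smul hc)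

variable {n : Type*} [Fintype n] [DecidableEq n]

theorem inner_toEuclideanLin_le_of_le {A B : Matrix n n ℝ} (h : A ≤ B) (x : EuclideanSpace ℝ n) :
    ⟪toEuclideanLin A x, x⟫ ≤ ⟪toEuclideanLin B x, x⟫ := by
  have := (isPositive_toEuclideanLin_iff.2 h).inner_nonneg_left x
  rwa [map_sub, LinearMap.sub_apply, inner_sub_left, sub_nonneg] at this

theorem inner_toEuclideanLin_smul_one (c : ℝ) (x : EuclideanSpace ℝ n) :
    ⟪toEuclideanLin (c • 1 : Matrix n n ℝ) x, x⟫ = c * ‖x‖ ^ 2 := by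
  rw [map_smul, toLpLin_one, LinearMap.smul_apply, LinearMap.id_apply,
    real_inner_smul_left, real_inner_self_eq_norm_sq]

theorem IsHermitian.smul_one_le_of_forall_le_eigenvalues {A : Matrix n n ℝ} (hA : A.IsHermitian)
    {c : ℝ} (h : ∀ i, c ≤ hA.eigenvalues i) : c • 1 ≤ A := by
  rw [← Algebra.algebraMap_eq_smul_one, algebraMap_le_iff_le_spectrum (a := A) hA.isSelfAdjoint,
    hA.spectrum_real_eq_range_eigenvalues]
  rintro _ ⟨i, rfl⟩
  exact h i

theorem IsHermitian.le_smul_one_of_forall_eigenvalues_le {A : Matrix n n ℝ} (hA : A.IsHermitian)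
    {c : ℝ} (h : ∀ i, hA.eigenvalues i ≤ c) : A ≤ c • 1 := by
  rw [← Algebra.algebraMap_eq_smul_one, le_algebraMap_iff_spectrum_le (a := A) hA.isSelfAdjoint,
    hA.spectrum_real_eq_range_eigenvalues]
  rintro _ ⟨i, rfl⟩
  exact h i

theorem norm_le_of_neg_smul_one_le_of_le_smul_one {A : Matrix n n ℝ} {c : ℝ} (hc : 0 ≤ c)
    (hlo : -(c • 1) ≤ A) (hhi : A ≤ c • 1) : ‖A‖ ≤ c := by
  have hA : A.IsHermitian := by
    simpa using (isHermitian_one.smul (IsSelfAdjoint.all c)).sub (le_iff.1 hhi).1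
  rw [cstar_norm_def, ContinuousLinearMap.norm_eq_iSup_rayleighQuotient _
    (isSymmetric_toEuclideanLin_iff.2 hA)]
  refine ciSup_le fun x => ?_
  have h₁ := inner_toEuclideanLin_le_of_le hlo x
  have h₂ := inner_toEuclideanLin_le_of_le hhi x
  rw [← neg_smul, inner_toEuclideanLin_smul_one, neg_mul] at h₁
  rw [inner_toEuclideanLin_smul_one] at h₂
  rcases eq_or_ne x 0 with rfl | hx
  · simpa using hc
  rw [ContinuousLinearMap.rayleighQuotient, ContinuousLinearMap.reApplyInnerSelf_apply,
    RCLike.re_to_real, abs_div, abs_of_pos (by positivity : 0 < ‖x‖ ^ 2),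
    div_le_iff₀ (by positivity), abs_le]
  exact ⟨h₁, h₂⟩

theorem norm_sub_one_le {A : Matrix n n ℝ} {ε : ℝ} (hε : 0 ≤ ε) (hlo : (1 - ε) • 1 ≤ A)
    (hhi : A ≤ (1 + ε) • 1) : ‖A - 1‖ ≤ ε := by
  refine norm_le_of_neg_smul_one_le_of_le_smul_one hε ?_ ?_ <;> rw [le_iff] at *
  · convert hlo using 1; module
  · convert hhi using 1; module

theorem norm_inv_le_of_smul_one_le {A : Matrix n n ℝ} {c : ℝ} (hc : 0 < c) (h : c • 1 ≤ A) :
    ‖A⁻¹‖ ≤ c⁻¹ := by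
  refine ContinuousLinearMap.opNorm_le_bound _ (inv_nonneg.2 hc.le) fun y => ?_
  set x := toEuclideanLin A⁻¹ y
  have hy : toEuclideanLin A x = y := by
    rw [← LinearMap.comp_apply, ← toLpLin_mul,
      mul_nonsing_inv _ ((isUnit_iff_isUnit_det A).1 (posDef_of_smul_one_le hc h).isUnit),
      toLpLin_one, LinearMap.id_apply]
  have hcoer : c * ‖x‖ ^ 2 ≤ ‖y‖ * ‖x‖ := by
    calc c * ‖x‖ ^ 2 = ⟪toEuclideanLin (c • 1 : Matrix n n ℝ) x, x⟫ :=
          (inner_toEuclideanLin_smul_one c x).symm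
      _ ≤ ⟪toEuclideanLin A x, x⟫ := inner_toEuclideanLin_le_of_le h x
      _ ≤ ‖y‖ * ‖x‖ := hy ▸ real_inner_le_norm _ _
  change ‖x‖ ≤ c⁻¹ * ‖y‖
  rw [le_inv_mul_iff₀ hc]
  nlinarith [norm_nonneg x, norm_nonneg y]

theorem norm_cfcSqrt {A : Matrix n n ℝ} (hA : 0 ≤ A) : ‖CFC.sqrt A‖ = √‖A‖ := by
  have h := CStarRing.norm_star_mul_self (x := CFC.sqrt A)
  rw [(IsSelfAdjoint.of_nonneg (CFC.sqrt_nonneg A)).star_eq, CFC.sqrt_mul_sqrt_self A hA] at h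
  rw [h, Real.sqrt_mul_self (norm_nonneg _)]

theorem norm_sub_le_of_eq_sub_toEuclideanLin {P H : Matrix n n ℝ} {w w' w₀ g : EuclideanSpace ℝ n}
    (h : w' = w - toEuclideanLin P g) :
    ‖w' - w₀‖ ≤ ‖1 - P * H‖ * ‖w - w₀‖ + ‖P‖ * ‖g - toEuclideanLin H (w - w₀)‖ := by
  have hstep : w' - w₀ =
      toEuclideanLin (1 - P * H) (w - w₀) - toEuclideanLin P (g - toEuclideanLin H (w - w₀)) := by
    simp only [h, map_sub, toLpLin_mul_same, toLpLin_one, LinearMap.sub_apply,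
      LinearMap.comp_apply, LinearMap.id_apply]
    abel
  rw [hstep]
  exact (norm_sub_le _ _).trans (add_le_add ((1 - P * H).l2_opNorm_mulVec (w - w₀))
    (P.l2_opNorm_mulVec (g - toEuclideanLin H (w - w₀))))

variable {m : ℕ}

theorem norm_average_inv_le {H : Matrix n n ℝ} {Ht : Fin m → Matrix n n ℝ} {a ε : ℝ}
    (ha : 0 < a) (hlo : a • 1 ≤ H) (hε : ε ≤ 1 / 2) (happrox : ∀ i, (1 - ε) • H ≤ Ht i) :
    ‖((1 : ℝ) / m) • ∑ i, (Ht i)⁻¹‖ ≤ 2 / a := by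
  have hε' : 0 < 1 - ε := by linarith
  refine norm_average_le (by positivity) fun i => ?_
  have hi : ((1 - ε) * a) • 1 ≤ Ht i := by
    rw [mul_smul]
    exact (smul_le_smul_of_nonneg_left hlo hε'.le).trans (happrox i)
  calc ‖(Ht i)⁻¹‖ ≤ ((1 - ε) * a)⁻¹ := norm_inv_le_of_smul_one_le (by positivity) hi
    _ ≤ 2 / a := by
        rw [inv_le_comm₀ (by positivity) (by positivity), inv_div]
        nlinarith

theorem norm_one_sub_average_inv_le {T : Fin m → Matrix n n ℝ} {ε : ℝ} (hε₀ : 0 ≤ ε)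
    (hε : ε ≤ 1 / 2) (hT : ∀ i, (1 - ε) • 1 ≤ T i ∧ T i ≤ (1 + ε) • 1)
    (havg : ((1 : ℝ) / m) • ∑ i, T i = 1) :
    ‖1 - ((1 : ℝ) / m) • ∑ i, (T i)⁻¹‖ ≤ 2 * ε ^ 2 := by
  have hε' : 0 < 1 - ε := by linarith
  refine norm_one_sub_average_le zero_le_two (fun i => ?_) (fun i => ?_)
    (fun i => norm_sub_one_le hε₀ (hT i).1 (hT i).2) havg
  · exact nonsing_inv_mul _
      ((isUnit_iff_isUnit_det _).1 (posDef_of_smul_one_le hε' (hT i).1).isUnit)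
  · calc ‖(T i)⁻¹‖ ≤ (1 - ε)⁻¹ := norm_inv_le_of_smul_one_le hε' (hT i).1
      _ ≤ 2 := by rw [inv_le_comm₀ hε' two_pos]; linarith

-- conjugating by `H^{-1/2}` reduces to the case `H = 1`
theorem norm_one_sub_average_inv_mul_le {H : Matrix n n ℝ} {Ht : Fin m → Matrix n n ℝ} {ε : ℝ}
    (hH : H.PosDef) (hε₀ : 0 ≤ ε) (hε : ε ≤ 1 / 2)
    (happrox : ∀ i, (1 - ε) • H ≤ Ht i ∧ Ht i ≤ (1 + ε) • H)
    (havg : ((1 : ℝ) / m) • ∑ i, Ht i = H) :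
    ‖1 - (((1 : ℝ) / m) • ∑ i, (Ht i)⁻¹) * H‖ ≤ 2 * ε ^ 2 * √(‖H‖ * ‖H⁻¹‖) := by
  set S := CFC.sqrt H
  have hSS : S * S = H := CFC.sqrt_mul_sqrt_self H hH.posSemidef.nonneg
  have hS : IsUnit S.det := isUnit_of_mul_isUnit_left (y := S.det) <| by
    rw [← det_mul, hSS, ← isUnit_iff_isUnit_det]; exact hH.isUnit
  have hSinv : IsSelfAdjoint S⁻¹ := (CFC.sqrt_nonneg H).posSemidef.isHermitian.inv
  have hconj : S⁻¹ * H * S⁻¹ = 1 := by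
    rw [← hSS, ← Matrix.mul_assoc, nonsing_inv_mul _ hS, Matrix.one_mul, mul_nonsing_inv _ hS]
  set T : Fin m → Matrix n n ℝ := fun i => S⁻¹ * Ht i * S⁻¹
  have hT (i : Fin m) : (1 - ε) • 1 ≤ T i ∧ T i ≤ (1 + ε) • 1 := by
    have h₁ := hSinv.conjugate_le_conjugate (happrox i).1
    have h₂ := hSinv.conjugate_le_conjugate (happrox i).2
    rw [mul_smul_comm, smul_mul_assoc, hconj] at h₁ h₂
    exact ⟨h₁, h₂⟩
  have havgT : ((1 : ℝ) / m) • ∑ i, T i = 1 := by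
    rw [← Finset.sum_mul, ← Finset.mul_sum, ← smul_mul_assoc, ← mul_smul_comm, havg, hconj]
  have hfactor : 1 - (((1 : ℝ) / m) • ∑ i, (Ht i)⁻¹) * H =
      S⁻¹ * (1 - ((1 : ℝ) / m) • ∑ i, (T i)⁻¹) * S := by
    simp only [T, Matrix.mul_inv_rev, nonsing_inv_nonsing_inv _ hS]
    rw [← hSS]
    simp only [Matrix.mul_sub, Matrix.sub_mul, Matrix.mul_one, Matrix.mul_smul, Matrix.smul_mul,
      Finset.mul_sum, Finset.sum_mul, ← Matrix.mul_assoc, nonsing_inv_mul _ hS, Matrix.one_mul]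
  calc ‖1 - (((1 : ℝ) / m) • ∑ i, (Ht i)⁻¹) * H‖
      ≤ ‖S⁻¹‖ * ‖1 - ((1 : ℝ) / m) • ∑ i, (T i)⁻¹‖ * ‖S‖ := hfactor ▸ norm_mul₃_le
    _ ≤ √‖H⁻¹‖ * (2 * ε ^ 2) * √‖H‖ := by
        rw [hH.posSemidef.inv_sqrt, norm_cfcSqrt hH.posSemidef.inv.nonneg,
          norm_cfcSqrt hH.posSemidef.nonneg]
        gcongr
        exact norm_one_sub_average_inv_le hε₀ hε hT havgT
    _ = 2 * ε ^ 2 * √(‖H‖ * ‖H⁻¹‖) := by rw [Real.sqrt_mul (norm_nonneg _)]; ring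

end Matrix

section ExtremeEigenvalues

variable {d : ℕ} {H : Matrix (Fin d) (Fin d) ℝ}

theorem sMin_smul_one_le (hH : H.IsHermitian) : sMin hH • 1 ≤ H :=
  hH.smul_one_le_of_forall_le_eigenvalues fun i => ciInf_le (Set.finite_range _).bddBelow i

theorem le_sMax_smul_one (hH : H.IsHermitian) : H ≤ sMax hH • 1 :=
  hH.le_smul_one_of_forall_eigenvalues_le fun i => le_ciSup (Set.finite_range _).bddAbove i

theorem sMin_pos [NeZero d] (hH : H.PosDef) : 0 < sMin hH.1 := by
  obtain ⟨i, hi⟩ := Finite.exists_min hH.1.eigenvalues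
  exact (hH.eigenvalues_pos i).trans_le (le_ciInf hi)

theorem norm_le_sMax (hH : H.PosSemidef) : ‖H‖ ≤ sMax hH.1 := by
  have h₀ : 0 ≤ sMax hH.1 := Real.iSup_nonneg hH.eigenvalues_nonneg
  refine norm_le_of_neg_smul_one_le_of_le_smul_one h₀ ?_ (le_sMax_smul_one hH.1)
  exact (neg_nonpos.2 (smul_nonneg h₀ PosSemidef.one.nonneg)).trans hH.nonneg

theorem norm_mul_norm_inv_le_sMax_div_sMin [NeZero d] (hH : H.PosDef) :
    ‖H‖ * ‖H⁻¹‖ ≤ sMax hH.1 / sMin hH.1 := by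
  rw [div_eq_mul_inv]
  exact mul_le_mul (norm_le_sMax hH.posSemidef)
    (norm_inv_le_of_smul_one_le (sMin_pos hH) (sMin_smul_one_le hH.1)) (norm_nonneg _)
    ((norm_nonneg _).trans (norm_le_sMax hH.posSemidef))

end ExtremeEigenvalues

theorem giant_local_convergence_general {d m : ℕ}
    (F : EuclideanSpace ℝ (Fin d) → ℝ) (hF : ContDiff ℝ 2 F)
    (wstar : EuclideanSpace ℝ (Fin d)) (hmin : ∀ w, F wstar ≤ F w)
    (L : ℝ)
    (Hess : EuclideanSpace ℝ (Fin d) → Matrix (Fin d) (Fin d) ℝ)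
    (hHess : ∀ w y, fderiv ℝ (gradient F) w y = Matrix.toEuclideanLin (Hess w) y)
    (hLip : ∀ w w' x, ‖Matrix.toEuclideanLin (Hess w - Hess w') x‖ ≤ L * ‖w - w'‖ * ‖x‖)
    (wt : EuclideanSpace ℝ (Fin d)) (hHt : (Hess wt).PosDef)
    (ε : ℝ) (hε : 0 < ε ∧ ε ≤ 1 / 2)
    (Htil : Fin m → Matrix (Fin d) (Fin d) ℝ)
    (happrox : ∀ i,
      (Htil i - (1 - ε) • Hess wt).PosSemidef ∧ ((1 + ε) • Hess wt - Htil i).PosSemidef)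
    (havg : ((1 : ℝ) / m) • ∑ i, Htil i = Hess wt)
    (wnext : EuclideanSpace ℝ (Fin d))
    (hupdate : wnext =
      wt - ((1 : ℝ) / m) • ∑ i, Matrix.toEuclideanLin (Htil i)⁻¹ (gradient F wt)) :
    ‖wnext - wstar‖ ≤
      3 * ε ^ 2 * Real.sqrt (sMax hHt.1 / sMin hHt.1) * ‖wt - wstar‖
        + (L / sMin hHt.1) * ‖wt - wstar‖ ^ 2 := by
  rcases eq_zero_or_neZero d with rfl | hd
  · simp [Subsingleton.elim (wnext - wstar) 0, Subsingleton.elim (wt - wstar) 0]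
  set H := Hess wt
  set σ := sMin hHt.1
  set Δ := wt - wstar
  set P := ((1 : ℝ) / m) • ∑ i, (Htil i)⁻¹
  have hσ : 0 < σ := sMin_pos hHt
  have hr : ‖gradient F wt - toEuclideanLin H Δ‖ ≤ L / 2 * ‖Δ‖ ^ 2 := by
    have := norm_image_sub_sub_fderiv_le_of_lipschitz
      (fun w => (hF.differentiable_gradient w).hasFDerivAt)
      (fun w w' v => by rw [hHess, hHess, ← LinearMap.sub_apply, ← map_sub]; exact hLip w w' v)
      wstar wt
    rwa [IsLocalMin.gradient_eq_zero (Filter.Eventually.of_forall hmin), sub_zero, hHess] at this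
  have hP : ‖P‖ ≤ 2 / σ :=
    norm_average_inv_le hσ (sMin_smul_one_le hHt.1) hε.2 fun i => (happrox i).1
  have hcore : ‖1 - P * H‖ ≤ 2 * ε ^ 2 * √(sMax hHt.1 / σ) :=
    (norm_one_sub_average_inv_mul_le hHt hε.1.le hε.2 happrox havg).trans
      (by gcongr; exact norm_mul_norm_inv_le_sMax_div_sMin hHt)
  calc ‖wnext - wstar‖ ≤ ‖1 - P * H‖ * ‖Δ‖ + ‖P‖ * ‖gradient F wt - toEuclideanLin H Δ‖ :=
        norm_sub_le_of_eq_sub_toEuclideanLin <| by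
          simp only [hupdate, P, map_smul, map_sum, LinearMap.smul_apply, LinearMap.sum_apply]
    _ ≤ 2 * ε ^ 2 * √(sMax hHt.1 / σ) * ‖Δ‖ + 2 / σ * (L / 2 * ‖Δ‖ ^ 2) := by gcongr
    _ ≤ 3 * ε ^ 2 * √(sMax hHt.1 / σ) * ‖Δ‖ + L / σ * ‖Δ‖ ^ 2 := by
        rw [show 2 / σ * (L / 2 * ‖Δ‖ ^ 2) = L / σ * ‖Δ‖ ^ 2 by ring]
        gcongr
        norm_num

/-- local convergence of one GIANT step (averaged local Newton directions)
for a twice continuously differentiable objective `F` with `L`-Lipschitz Hessian. -/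
theorem giant_local_convergence {d m : ℕ}
    (F : EuclideanSpace ℝ (Fin d) → ℝ) (hF : ContDiff ℝ 2 F)
    (wstar : EuclideanSpace ℝ (Fin d)) (hmin : ∀ w, F wstar ≤ F w)
    (L : ℝ)
    (Hess : EuclideanSpace ℝ (Fin d) → Matrix (Fin d) (Fin d) ℝ)
    (hHess : ∀ w y, fderiv ℝ (gradient F) w y = Matrix.toEuclideanLin (Hess w) y)
    (hLip : ∀ w w' x, ‖Matrix.toEuclideanLin (Hess w - Hess w') x‖ ≤ L * ‖w - w'‖ * ‖x‖)
    (wt : EuclideanSpace ℝ (Fin d)) (hHt : (Hess wt).PosDef)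
    (ε : ℝ) (hε : 0 < ε ∧ ε ≤ 1 / 2)
    (Htil : Fin m → Matrix (Fin d) (Fin d) ℝ)
    (hHtilPD : ∀ i, (Htil i).PosDef)
    (happrox : ∀ i,
      (Htil i - (1 - ε) • Hess wt).PosSemidef ∧ ((1 + ε) • Hess wt - Htil i).PosSemidef)
    (havg : ((1 : ℝ) / m) • ∑ i, Htil i = Hess wt)
    (wnext : EuclideanSpace ℝ (Fin d))
    (hupdate : wnext =
      wt - ((1 : ℝ) / m) • ∑ i, Matrix.toEuclideanLin (Htil i)⁻¹ (gradient F wt)) :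
    ‖wnext - wstar‖ ≤
      3 * ε ^ 2 * Real.sqrt (sMax hHt.1 / sMin hHt.1) * ‖wt - wstar‖
        + (L / sMin hHt.1) * ‖wt - wstar‖ ^ 2 :=
  giant_local_convergence_general F hF wstar hmin L Hess hHess hLip wt hHt ε hε Htil happrox havg
    wnext hupdate
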